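/- Let K = (V, 2^V) be the full (n−1)-dimensional simplex on a vertex set V with n elements, and let 0 ≤ q ≤ n − 2. Then the multiset of eigenvalues of the restriction of D_q^up to C^q(K,ℂ) is symmetric about the origin if and only if n is even and q = n/2 − 1. -/

import Mathlib

open scoped BigOperators Classical

/-- The set of oriented `q`-simplices of the full `(n−1)`-dimensional simplex on the
vertex set `Fin n`: a `(q+1)`-element vertex set together with one of its two
orientations (`true` denoting the orientation given by the increasing ordering of the
vertices). -/
abbrev FullOSimp (n q : ℕ) : Type := {A : Finset (Fin n) // A.card = q + 1} × Bool

/-- The orientation reversal `τ ↦ τ̄`. -/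
def fbar {n q : ℕ} (τ : FullOSimp n q) : FullOSimp n q := (τ.1, !τ.2)

/-- The sign of an orientation. -/
def bsgn (b : Bool) : ℝ := if b then 1 else -1

/-- The position of the vertex removed from `B` to get `A` (for `A ⊆ B` with one
element removed), in the increasing enumeration of `B`. -/
def remIdx {n : ℕ} (B A : Finset (Fin n)) : ℕ :=
  ∑ a ∈ B \ A, (B.filter (fun b => b < a)).card

/-- The incidence sign `sgn(σ,τ)`: for `σ = ⟨a_0 ⋯ a_{q+1}⟩` (increasing) and
`τ = ⟨a_0 ⋯ â_j ⋯ a_{q+1}⟩` it is `(−1)^j`, extended to both orientations by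
`sgn(σ̄,τ) = sgn(σ,τ̄) = −sgn(σ,τ)`, and `0` if `[τ]` is not a face of `[σ]`. -/
noncomputable def fsgn {n q : ℕ} (σ : FullOSimp n (q + 1)) (τ : FullOSimp n q) : ℝ :=
  if τ.1.1 ⊆ σ.1.1 then (-1 : ℝ) ^ (remIdx σ.1.1 τ.1.1) * bsgn σ.2 * bsgn τ.2 else 0

/-- `deg_X(τ)`: the number of `(q+1)`-dimensional simplices containing `[τ]` as a face. -/
noncomputable def fdegX (n q : ℕ) (τ : FullOSimp n q) : ℕ :=
  (Finset.univ.filter (fun B : Finset (Fin n) => B.card = q + 2 ∧ τ.1.1 ⊆ B)).card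

/-- `η^up(τ₁,τ₂) = sgn(σ,τ₁)·sgn(σ,τ₂)` where `σ` is (either orientation of) the unique
`(q+1)`-simplex containing the up neighbors `[τ₁] ≠ [τ₂]`, and `0` otherwise. -/
noncomputable def fetaUp {n q : ℕ} (τ₁ τ₂ : FullOSimp n q) : ℝ :=
  if h : τ₁.1.1 ≠ τ₂.1.1 ∧ (τ₁.1.1 ∪ τ₂.1.1).card = q + 1 + 1 then
    fsgn (⟨⟨τ₁.1.1 ∪ τ₂.1.1, h.2⟩, true⟩ : FullOSimp n (q + 1)) τ₁ *
      fsgn (⟨⟨τ₁.1.1 ∪ τ₂.1.1, h.2⟩, true⟩ : FullOSimp n (q + 1)) τ₂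
  else 0

/-- The normalization constant `(2(q+1) deg_X τ)^{-1/2}`. -/
noncomputable def fc (n q : ℕ) (τ : FullOSimp n q) : ℂ :=
  ((Real.sqrt (2 * (q + 1) * fdegX n q τ) : ℝ) : ℂ)⁻¹

/-- The matrix of `d_{X_q} : ℓ²(E(X_q)) → ℓ²(K_q)`. -/
noncomputable def fdM (n q : ℕ) : Matrix (FullOSimp n q) (FullOSimp n q × FullOSimp n q) ℂ :=
  fun τ p => if p.1 = τ ∧ fetaUp p.1 p.2 ≠ 0 then fc n q τ else 0

/-- The matrix of `d_{X_q}* : ℓ²(K_q) → ℓ²(E(X_q))`. -/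
noncomputable def fdstarM (n q : ℕ) : Matrix (FullOSimp n q × FullOSimp n q) (FullOSimp n q) ℂ :=
  fun p τ => if p.1 = τ ∧ fetaUp p.1 p.2 ≠ 0 then fc n q τ else 0

/-- The matrix of the shift `(S^up g)(τ₁,τ₂) = η^up(τ₁,τ₂) g(τ₂,τ₁)`. -/
noncomputable def fshiftM (n q : ℕ) :
    Matrix (FullOSimp n q × FullOSimp n q) (FullOSimp n q × FullOSimp n q) ℂ :=
  fun p p' => if p'.1 = p.2 ∧ p'.2 = p.1 then (fetaUp p.1 p.2 : ℂ) else 0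

/-- The up discriminant `D_q^up = d_{X_q} S^up d_{X_q}*` of the full simplex. -/
noncomputable def fdiscM (n q : ℕ) : Matrix (FullOSimp n q) (FullOSimp n q) ℂ :=
  fdM n q * fshiftM n q * fdstarM n q

/-- The cochain space `C^q(K,ℂ) = {f : f(τ̄) = −f(τ)}`. -/
noncomputable def fCSub (n q : ℕ) : Submodule ℂ (FullOSimp n q → ℂ) where
  carrier := {f | ∀ τ, f (fbar τ) = - f τ}
  add_mem' := by
    intro a b ha hb τ
    simp only [Pi.add_apply, ha τ, hb τ]; ring
  zero_mem' := by intro τ; simp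
  smul_mem' := by
    intro c f hf τ
    simp only [Pi.smul_apply, hf τ, smul_eq_mul]; ring

/-- The eigenspace of the restriction of `D_q^up` to `C^q(K,ℂ)` at `μ`. -/
noncomputable def fEig (n q : ℕ) (μ : ℂ) : Submodule ℂ (FullOSimp n q → ℂ) :=
  Module.End.eigenspace (Matrix.mulVecLin (fdiscM n q)) μ ⊓ fCSub n q

/-!
Write an oriented `q`-simplex as a pair (face, orientation). In these coordinates `D = D_q^up` is
the Kronecker product `E ⊗ P`, where `E` is the matrix of the restriction of `D` to cochains and
`P = ½ (1, -1)ᵀ (1, -1)` is a rank-one idempotent; in particular `D` maps into `C^q`, so for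
`μ ≠ 0` the `μ`-eigenspaces of `D` and of its restriction coincide. Up to scaling, `E` is the
signed up-adjacency matrix `L_up - (n - q - 1)`, where `L_up = ∂ᵀ∂`. On the full simplex
`L_up + L_down = n` and `∂∂ = 0`, so `L_up² = n L_up`. Hence `E` has only the eigenvalues
`μ₁ = 1/(n-q-1)` and `μ₂ = -1/(q+1)`, `D (D - μ₁) (D - μ₂) = 0`, `tr D = 0` and `tr D² ≠ 0`.
The multiplicity of `μ₁` is `tr (D² - μ₂ D) / (μ₁ (μ₁ - μ₂))`, the trace of a projection, and
symmetrically for `μ₂`. So both occur, and the spectrum can only be symmetric if `μ₂ = -μ₁`, that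
is `n = 2 (q + 1)`; then `tr D = 0` makes the two multiplicities equal.
-/

namespace Module.End

variable {K V : Type*} [Field K] [AddCommGroup V] [Module K V] {f : Module.End K V} {μ ν a : K}

theorem eigenspace_le_of_range_le {p : Submodule K V} (h : LinearMap.range f ≤ p) (ha : a ≠ 0) :
    f.eigenspace a ≤ p := fun v hv => by
  rw [mem_eigenspace_iff] at hv
  rw [← inv_smul_smul₀ ha v, ← hv]
  exact p.smul_mem _ (h (LinearMap.mem_range_self f v))

theorem eigenspace_eq_bot_of_cubic (hf : f * f * f = (μ + ν) • (f * f) - (μ * ν) • f)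
    (ha : a * (a - μ) * (a - ν) ≠ 0) : f.eigenspace a = ⊥ := by
  refine eq_bot_iff.2 fun v hv => ?_
  rw [mem_eigenspace_iff] at hv
  have hv3 := congr($hf v)
  simp only [mul_apply, LinearMap.sub_apply, LinearMap.smul_apply, hv, map_smul, smul_smul]
    at hv3
  have : (a * (a - μ) * (a - ν)) • v = 0 := by
    rw [← sub_eq_zero.2 hv3]
    module
  exact (smul_eq_zero.1 this).resolve_left ha

theorem finrank_eigenspace_mul_of_cubic [FiniteDimensional K V]
    (hf : f * f * f = (μ + ν) • (f * f) - (μ * ν) • f) (hμ : μ ≠ 0) (hμν : μ ≠ ν) :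
    (Module.finrank K (f.eigenspace μ) : K) * (μ * (μ - ν)) =
      LinearMap.trace K V (f * f) - ν * LinearMap.trace K V f := by
  have hs : μ * (μ - ν) ≠ 0 := mul_ne_zero hμ (sub_ne_zero.2 hμν)
  -- `f (f - ν)` kills the other two eigenvalues and scales the `μ`-eigenspace by `μ (μ - ν)`
  have hproj : LinearMap.IsProj (f.eigenspace μ) ((μ * (μ - ν))⁻¹ • (f * f - ν • f)) := by
    have hf' : f * (f * f - ν • f) = μ • (f * f - ν • f) := by
      rw [mul_sub, mul_smul_comm, ← mul_assoc, hf]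
      module
    refine ⟨fun v => ?_, fun v hv => ?_⟩
    · rw [mem_eigenspace_iff, LinearMap.smul_apply, map_smul, ← mul_apply, hf',
        LinearMap.smul_apply, smul_comm]
    · rw [mem_eigenspace_iff] at hv
      simp only [LinearMap.smul_apply, LinearMap.sub_apply, mul_apply, hv, map_smul, smul_smul]
      rw [← sub_smul, smul_smul]
      convert one_smul K v
      field_simp
  have htr := hproj.trace
  rw [map_smul, map_sub, map_smul, smul_eq_mul, smul_eq_mul] at htr
  rw [← htr]
  field_simp

theorem finrank_eigenspace_neg_of_cube [CharZero K] [FiniteDimensional K V]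
    (hf : f * f * f = μ ^ 2 • f) (htr : LinearMap.trace K V f = 0) (a : K) :
    Module.finrank K (f.eigenspace (-a)) = Module.finrank K (f.eigenspace a) := by
  rcases eq_or_ne a 0 with rfl | ha
  · rw [neg_zero]
  by_cases hμ : a ^ 2 = μ ^ 2
  · have hf' (c : K) (hc : c ^ 2 = μ ^ 2) : f * f * f = (c + -c) • (f * f) - (c * -c) • f := by
      rw [hf, ← hc]
      module
    have hpos := finrank_eigenspace_mul_of_cubic (hf' a hμ) ha (by grind)
    have hneg := finrank_eigenspace_mul_of_cubic (hf' (-a) (by rw [neg_sq, hμ]))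
      (neg_ne_zero.2 ha) (by grind)
    rw [htr, mul_zero] at hpos hneg
    rw [show -a * (-a - - -a) = a * (a - -a) by ring, ← hpos] at hneg
    exact_mod_cast mul_right_cancel₀ (by simp [ha]) hneg
  · have hf' : f * f * f = (μ + -μ) • (f * f) - (μ * -μ) • f := by
      rw [hf]
      module
    have hbot (c : K) (hc : c ≠ 0) (hcμ : c ^ 2 ≠ μ ^ 2) : f.eigenspace c = ⊥ := by
      refine eigenspace_eq_bot_of_cubic hf' ?_
      rw [show c * (c - μ) * (c - -μ) = c * (c ^ 2 - μ ^ 2) by ring]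
      exact mul_ne_zero hc (sub_ne_zero.2 hcμ)
    rw [hbot a ha hμ, hbot (-a) (neg_ne_zero.2 ha) (by rwa [neg_sq])]

end Module.End

namespace Matrix

open scoped Kronecker

variable {l m R : Type*} [Fintype l] [Fintype m] [CommRing R] {E : Matrix l l R} {P : Matrix m m R}

theorem kronecker_mul_self_mul_self_of_idempotent [DecidableEq l] {s t : R}
    (hE : E * E = s • E - t • 1) (hP : P * P = P) :
    (E ⊗ₖ P) * (E ⊗ₖ P) * (E ⊗ₖ P) = s • ((E ⊗ₖ P) * (E ⊗ₖ P)) - t • (E ⊗ₖ P) := by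
  have hE3 : E * E * E = s • (E * E) - t • E :=
    calc E * E * E = (s • E - t • 1) * E := by rw [hE]
      _ = s • (E * E) - t • E := by
        rw [Matrix.sub_mul, Matrix.smul_mul, Matrix.smul_mul, Matrix.one_mul]
  simp only [← mul_kronecker_mul, hP, hE3]
  ext ⟨i, a⟩ ⟨j, b⟩
  simp [sub_mul, mul_assoc]

theorem trace_kronecker_mul_self_of_idempotent (hP : P * P = P) :
    trace ((E ⊗ₖ P) * (E ⊗ₖ P)) = trace (E * E) * trace P := by
  rw [← mul_kronecker_mul, hP, trace_kronecker]

end Matrix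

section Signs

open Finset

variable {n : ℕ}

theorem remIdx_insert_self {A : Finset (Fin n)} {x : Fin n} (hx : x ∉ A) :
    remIdx (insert x A) A = #{b ∈ A | b < x} := by
  rw [remIdx, insert_sdiff_of_notMem _ hx, sdiff_self, bot_eq_empty, insert_empty, sum_singleton,
    filter_insert, if_neg (lt_irrefl x)]

theorem card_filter_insert_lt {A : Finset (Fin n)} {x : Fin n} (hx : x ∉ A) (z : Fin n) :
    #{b ∈ insert x A | b < z} = #{b ∈ A | b < z} + if x < z then 1 else 0 := by
  rw [filter_insert]
  split_ifs
  · rw [card_insert_of_notMem fun h => hx (mem_filter.1 h).1]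
  · rfl

/-- The two ways of going down from `T ∪ {x, z}` to `T` carry opposite signs. -/
theorem odd_remIdx_diamond {T : Finset (Fin n)} {x z : Fin n} (hx : x ∉ T) (hz : z ∉ T)
    (hxz : x ≠ z) :
    Odd (remIdx (insert x (insert z T)) (insert z T) + remIdx (insert z T) T +
      (remIdx (insert x (insert z T)) (insert x T) + remIdx (insert x T) T)) := by
  have hx' : x ∉ insert z T := by simp [hxz, hx]
  have hz' : z ∉ insert x T := by simp [hxz.symm, hz]
  rw [remIdx_insert_self hx', insert_comm x z, remIdx_insert_self hz, remIdx_insert_self hz',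
    remIdx_insert_self hx, card_filter_insert_lt hz, card_filter_insert_lt hx, Nat.odd_iff]
  rcases hxz.lt_or_gt with h | h <;> simp [h, h.not_gt] <;> omega

theorem odd_remIdx_union_inter {k : ℕ} {A B : Finset (Fin n)} (hA : #A = k + 1)
    (hB : #B = k + 1) (hAB : #(A ∪ B) = k + 2) :
    Odd (remIdx (A ∪ B) A + remIdx (A ∪ B) B + (remIdx A (A ∩ B) + remIdx B (A ∩ B))) := by
  have hI : #(A ∩ B) = k := by
    have := card_union_add_card_inter A B
    omega
  obtain ⟨x, hx⟩ := card_eq_one.1 (by have := card_sdiff_add_card_inter A B; omega :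
    #(A \ B) = 1)
  obtain ⟨z, hz⟩ := card_eq_one.1 (by
    have := card_sdiff_add_card_inter B A
    rw [inter_comm] at this
    omega : #(B \ A) = 1)
  have hxA := mem_sdiff.1 (hx ▸ mem_singleton_self x)
  have hzB := mem_sdiff.1 (hz ▸ mem_singleton_self z)
  obtain ⟨T, hT⟩ : ∃ T, A ∩ B = T := ⟨_, rfl⟩
  have hA' : A = insert x T := by rw [← sdiff_union_inter A B, hx, hT, ← insert_eq]
  have hB' : B = insert z T := by rw [← sdiff_union_inter B A, hz, inter_comm, hT, ← insert_eq]
  have hxT : x ∉ T := fun h => hxA.2 (mem_inter.1 (hT ▸ h)).2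
  have hzT : z ∉ T := fun h => hzB.2 (mem_inter.1 (hT ▸ h)).1
  have hxz : x ≠ z := fun h => hzB.2 (h ▸ hxA.1)
  subst hA' hB'
  have := odd_remIdx_diamond hxT hzT hxz
  rw [insert_union, union_insert, union_self, hT]
  rw [Nat.odd_iff] at this ⊢
  omega

theorem neg_one_pow_add_neg_one_pow_of_odd {R : Type*} [CommRing R] {a b : ℕ}
    (h : Odd (a + b)) : (-1 : R) ^ a + (-1) ^ b = 0 := by
  have hab : (-1 : R) ^ a * (-1) ^ b = -1 := by rw [← pow_add, h.neg_one_pow]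
  have ha : (-1 : R) ^ a * (-1) ^ a = 1 := by rw [← pow_add, Even.neg_one_pow ⟨a, rfl⟩]
  linear_combination (-1 : R) ^ a * hab - (-1 : R) ^ b * ha

end Signs

section Faces

open Finset

abbrev Face (n k : ℕ) : Type := {A : Finset (Fin n) // #A = k}

variable {n k : ℕ} {R : Type*} [CommRing R]

theorem image_insert_sdiff_eq_filter {T U : Finset (Fin n)} (hTU : T ⊆ U) :
    (U \ T).image (insert · T) = univ.filter fun A => #A = #T + 1 ∧ T ⊆ A ∧ A ⊆ U := by
  ext A
  simp only [mem_image, mem_sdiff, mem_filter, mem_univ, true_and]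
  constructor
  · rintro ⟨y, ⟨hyU, hyT⟩, rfl⟩
    exact ⟨card_insert_of_notMem hyT, subset_insert y T, insert_subset hyU hTU⟩
  · rintro ⟨hA, hTA, hAU⟩
    obtain ⟨y, hy⟩ := card_eq_one.1 (by rw [card_sdiff_of_subset hTA, hA]; omega : #(A \ T) = 1)
    have hyA : y ∈ A \ T := hy ▸ mem_singleton_self y
    refine ⟨y, ⟨hAU (mem_sdiff.1 hyA).1, (mem_sdiff.1 hyA).2⟩, ?_⟩
    rw [← union_sdiff_of_subset hTA, hy, union_comm, ← insert_eq]

theorem card_filter_superset {A : Finset (Fin n)} (hA : #A = k) :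
    #(univ.filter fun B : Finset (Fin n) => #B = k + 1 ∧ A ⊆ B) = n - k := by
  have h := image_insert_sdiff_eq_filter (subset_univ A)
  simp only [subset_univ, and_true, hA] at h
  rw [← h, card_image_of_injOn fun y hy y' _ => (insert_inj (mem_sdiff.1 hy).2).1,
    card_univ_sdiff, Fintype.card_fin, hA]

theorem sum_face (g : Finset (Fin n) → R) :
    ∑ A : Face n k, g A.1 = ∑ A, if #A = k then g A else 0 := by
  rw [← sum_filter]
  exact (sum_subtype _ (by simp) g).symm

theorem sum_face_between {T U : Finset (Fin n)} (hT : #T = k) (hTU : T ⊆ U)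
    (g : Finset (Fin n) → R) :
    ∑ A : Face n (k + 1), (if T ⊆ A.1 ∧ A.1 ⊆ U then g A.1 else 0) =
      ∑ y ∈ U \ T, g (insert y T) := by
  rw [← sum_image fun y hy y' _ => (insert_inj (mem_sdiff.1 hy).2).1,
    image_insert_sdiff_eq_filter hTU, sum_filter,
    sum_face fun A => if T ⊆ A ∧ A ⊆ U then g A else 0]
  simp only [hT, ← ite_and]

theorem sum_face_ite_superset (W : Finset (Fin n)) (hW : k ≤ #W) (g : Face n k → R) :
    ∑ U : Face n k, (if W ⊆ U.1 then g U else 0) = if h : #W = k then g ⟨W, h⟩ else 0 := by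
  split_ifs with h
  · refine (Fintype.sum_eq_single ⟨W, h⟩ fun U hU => if_neg fun hWU => hU ?_).trans
      (if_pos subset_rfl)
    exact Subtype.ext (eq_of_subset_of_card_le hWU (by rw [U.2, h])).symm
  · exact sum_eq_zero fun U _ => if_neg fun hWU => h (le_antisymm (U.2 ▸ card_le_card hWU) hW)

theorem sum_face_ite_subset (W : Finset (Fin n)) (hW : #W ≤ k) (g : Face n k → R) :
    ∑ T : Face n k, (if T.1 ⊆ W then g T else 0) = if h : #W = k then g ⟨W, h⟩ else 0 := by
  split_ifs with h
  · refine (Fintype.sum_eq_single ⟨W, h⟩ fun T hT => if_neg fun hTW => hT ?_).trans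
      (if_pos subset_rfl)
    exact Subtype.ext (eq_of_subset_of_card_le hTW (by rw [T.2, h]))
  · exact sum_eq_zero fun T _ => if_neg fun hTW => h (le_antisymm hW (T.2 ▸ card_le_card hTW))

theorem card_union_ge_of_ne {A B : Face n (k + 1)} (h : A ≠ B) : k + 2 ≤ #(A.1 ∪ B.1) := by
  have hne : A.1 ⊂ A.1 ∪ B.1 := Finset.ssubset_iff_subset_ne.2 ⟨subset_union_left, fun hA =>
    h (Subtype.ext (eq_of_subset_of_card_le (hA ▸ subset_union_right) (by rw [A.2, B.2]))).symm⟩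
  have := card_lt_card hne
  rw [A.2] at this
  omega

end Faces

section Laplacian

open Finset Matrix

variable (R : Type*) [CommRing R]

def boundary (n k : ℕ) : Matrix (Face n (k + 1)) (Face n k) R :=
  Matrix.of fun U A => if A.1 ⊆ U.1 then (-1) ^ remIdx U.1 A.1 else 0

def upLaplacian (n k : ℕ) : Matrix (Face n (k + 1)) (Face n (k + 1)) R :=
  (boundary R n (k + 1))ᵀ * boundary R n (k + 1)

def downLaplacian (n k : ℕ) : Matrix (Face n (k + 1)) (Face n (k + 1)) R :=
  boundary R n k * (boundary R n k)ᵀ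

variable {R} {n k : ℕ}

theorem boundary_mul_boundary : boundary R n (k + 1) * boundary R n k = 0 := by
  ext U T
  have hterm (A : Face n (k + 1)) : boundary R n (k + 1) U A * boundary R n k A T =
      if T.1 ⊆ A.1 ∧ A.1 ⊆ U.1 then (-1) ^ (remIdx U.1 A.1 + remIdx A.1 T.1) else 0 := by
    simp only [boundary, of_apply, pow_add]
    split_ifs <;> simp_all
  rw [mul_apply, Matrix.zero_apply, Fintype.sum_congr _ _ hterm]
  by_cases hTU : T.1 ⊆ U.1
  · rw [sum_face_between T.2 hTU fun A => (-1) ^ (remIdx U.1 A + remIdx A T.1)]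
    obtain ⟨x, z, hxz, hxz'⟩ := card_eq_two.1
      (by rw [card_sdiff_of_subset hTU, U.2, T.2]; omega : #(U.1 \ T.1) = 2)
    have hx : x ∉ T.1 := (mem_sdiff.1 (hxz' ▸ mem_insert_self x {z})).2
    have hz : z ∉ T.1 := (mem_sdiff.1 (hxz' ▸ mem_insert_of_mem (mem_singleton_self z))).2
    have hU : U.1 = insert z (insert x T.1) := by
      rw [← union_sdiff_of_subset hTU, hxz', union_insert, union_singleton, insert_comm]
    rw [hxz', sum_pair hxz, hU]
    exact neg_one_pow_add_neg_one_pow_of_odd (odd_remIdx_diamond hz hx hxz.symm)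
  · exact sum_eq_zero fun A _ => if_neg fun h => hTU (h.1.trans h.2)

theorem upLaplacian_apply (A B : Face n (k + 1)) :
    upLaplacian R n k A B = ∑ U : Face n (k + 1 + 1),
      if A.1 ∪ B.1 ⊆ U.1 then (-1) ^ (remIdx U.1 A.1 + remIdx U.1 B.1) else 0 := by
  rw [upLaplacian, mul_apply]
  refine Fintype.sum_congr _ _ fun U => ?_
  simp only [transpose_apply, boundary, of_apply, union_subset_iff, pow_add]
  split_ifs <;> simp_all

theorem downLaplacian_apply (A B : Face n (k + 1)) :
    downLaplacian R n k A B = ∑ T : Face n k,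
      if T.1 ⊆ A.1 ∩ B.1 then (-1) ^ (remIdx A.1 T.1 + remIdx B.1 T.1) else 0 := by
  rw [downLaplacian, mul_apply]
  refine Fintype.sum_congr _ _ fun T => ?_
  simp only [transpose_apply, boundary, of_apply, subset_inter_iff, pow_add]
  split_ifs <;> simp_all

theorem upLaplacian_apply_self (A : Face n (k + 1)) :
    upLaplacian R n k A A = (n - (k + 1) : ℕ) := by
  simp only [upLaplacian_apply, union_self, ← two_mul, pow_mul, neg_one_sq, one_pow]
  have h := sum_face_between (R := R) A.2 (subset_univ A.1) fun _ => 1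
  simp only [subset_univ, and_true] at h
  rw [h, sum_const, card_univ_sdiff, Fintype.card_fin, A.2, nsmul_one]

theorem downLaplacian_apply_self (A : Face n (k + 1)) :
    downLaplacian R n k A A = (k + 1 : ℕ) := by
  simp only [downLaplacian_apply, inter_self, ← two_mul, pow_mul, neg_one_sq, one_pow]
  rw [sum_face fun T => if T ⊆ A.1 then (1 : R) else 0]
  simp only [← ite_and, sum_boole]
  have h : univ.filter (fun T => #T = k ∧ T ⊆ A.1) = powersetCard k A.1 := by
    ext T
    simp [mem_powersetCard, and_comm]
  rw [h, card_powersetCard, A.2, Nat.choose_succ_self_right]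

theorem upLaplacian_apply_of_ne {A B : Face n (k + 1)} (h : A ≠ B) :
    upLaplacian R n k A B = if #(A.1 ∪ B.1) = k + 2 then
      (-1) ^ (remIdx (A.1 ∪ B.1) A.1 + remIdx (A.1 ∪ B.1) B.1) else 0 := by
  rw [upLaplacian_apply, sum_face_ite_superset _ (card_union_ge_of_ne h)
    fun U => (-1) ^ (remIdx U.1 A.1 + remIdx U.1 B.1)]
  split_ifs <;> rfl

theorem downLaplacian_apply_of_ne {A B : Face n (k + 1)} (h : A ≠ B) :
    downLaplacian R n k A B = if #(A.1 ∩ B.1) = k then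
      (-1) ^ (remIdx A.1 (A.1 ∩ B.1) + remIdx B.1 (A.1 ∩ B.1)) else 0 := by
  have := card_union_add_card_inter A.1 B.1
  have := card_union_ge_of_ne h
  rw [downLaplacian_apply, sum_face_ite_subset _ (by omega)
    fun T => (-1) ^ (remIdx A.1 T.1 + remIdx B.1 T.1)]
  split_ifs <;> rfl

theorem upLaplacian_add_downLaplacian :
    upLaplacian R n k + downLaplacian R n k = (n : R) • 1 := by
  ext A B
  rw [Matrix.add_apply, Matrix.smul_apply]
  rcases eq_or_ne A B with rfl | h
  · have : k + 1 ≤ n := by simpa [A.2] using card_le_univ A.1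
    rw [upLaplacian_apply_self, downLaplacian_apply_self, one_apply_eq, smul_eq_mul, mul_one,
      ← Nat.cast_add, Nat.sub_add_cancel this]
  · rw [upLaplacian_apply_of_ne h, downLaplacian_apply_of_ne h, one_apply_ne h, smul_zero]
    have := card_union_add_card_inter A.1 B.1
    rw [A.2, B.2] at this
    by_cases hU : #(A.1 ∪ B.1) = k + 2
    · rw [if_pos hU, if_pos (by omega)]
      exact neg_one_pow_add_neg_one_pow_of_odd (odd_remIdx_union_inter A.2 B.2 hU)
    · rw [if_neg hU, if_neg (by omega), add_zero]

theorem upLaplacian_mul_self :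
    upLaplacian R n k * upLaplacian R n k = (n : R) • upLaplacian R n k := by
  have h : upLaplacian R n k * downLaplacian R n k = 0 := by
    rw [upLaplacian, downLaplacian, Matrix.mul_assoc, ← Matrix.mul_assoc (boundary R n (k + 1)),
      boundary_mul_boundary, Matrix.zero_mul, Matrix.mul_zero]
  calc upLaplacian R n k * upLaplacian R n k =
        upLaplacian R n k * ((n : R) • 1 - downLaplacian R n k) := by
        rw [← eq_sub_of_add_eq upLaplacian_add_downLaplacian]
    _ = (n : R) • upLaplacian R n k := by
        rw [Matrix.mul_sub, h, sub_zero, Matrix.mul_smul, Matrix.mul_one]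

end Laplacian

section Discriminant

open Finset Matrix
open scoped Kronecker

variable {n q : ℕ}

theorem fetaUp_comm (τ τ' : FullOSimp n q) : fetaUp τ τ' = fetaUp τ' τ := by
  have hcomm (σ σ' : FullOSimp n q) (h : σ.1.1 ≠ σ'.1.1 ∧ #(σ.1.1 ∪ σ'.1.1) = q + 1 + 1) :
      σ'.1.1 ≠ σ.1.1 ∧ #(σ'.1.1 ∪ σ.1.1) = q + 1 + 1 :=
    ⟨h.1.symm, union_comm σ.1.1 _ ▸ h.2⟩
  unfold fetaUp
  by_cases h : τ.1.1 ≠ τ'.1.1 ∧ #(τ.1.1 ∪ τ'.1.1) = q + 1 + 1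
  · rw [dif_pos h, dif_pos (hcomm τ τ' h)]
    simp only [fsgn, union_comm τ'.1.1, mul_comm]
  · rw [dif_neg h, dif_neg fun h' => h (hcomm τ' τ h')]

theorem fdiscM_apply (τ τ' : FullOSimp n q) :
    fdiscM n q τ τ' = fc n q τ * fc n q τ' * fetaUp τ τ' := by
  have hshift (p : FullOSimp n q × FullOSimp n q) :
      (fdM n q * fshiftM n q) τ p = fdM n q τ p.swap * fetaUp p.2 p.1 := by
    rw [mul_apply, Fintype.sum_eq_single p.swap fun p' hp' => ?_]
    · simp [fshiftM]
    · rw [fshiftM, if_neg fun h => hp' (Prod.ext h.2.symm h.1.symm), mul_zero]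
  rw [fdiscM, mul_apply, Fintype.sum_eq_single (τ', τ) fun p hp => ?_, hshift]
  · by_cases h : fetaUp τ τ' = 0
    · simp [h]
    · simp [fdM, fdstarM, h, fetaUp_comm τ' τ]
      ring
  · rw [hshift]
    by_cases h1 : p.1 = τ'
    · have h2 : p.2 ≠ τ := fun h2 => hp (Prod.ext h1 h2)
      simp [fdM, h2]
    · simp [fdstarM, h1]

theorem fc_mul_fc (τ τ' : FullOSimp n q) :
    fc n q τ * fc n q τ' = (2 * (q + 1) * ((n - (q + 1) : ℕ) : ℂ))⁻¹ := by
  have hdeg (σ : FullOSimp n q) : fdegX n q σ = n - (q + 1) := card_filter_superset σ.1.2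
  rw [fc, fc, hdeg, hdeg, ← mul_inv, ← Complex.ofReal_mul, Real.mul_self_sqrt (by positivity)]
  push_cast
  ring

theorem fetaUp_eq_upLaplacian (τ τ' : FullOSimp n q) :
    (fetaUp τ τ' : ℂ) = (upLaplacian ℂ n q - ((n - (q + 1) : ℕ) : ℂ) • 1) τ.1 τ'.1 *
      ((bsgn τ.2 * bsgn τ'.2 : ℝ) : ℂ) := by
  rw [Matrix.sub_apply, Matrix.smul_apply]
  rcases eq_or_ne τ.1 τ'.1 with h | h
  · rw [fetaUp, dif_neg fun h' => h'.1 (congrArg Subtype.val h), h, upLaplacian_apply_self,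
      one_apply_eq, smul_eq_mul, mul_one, sub_self, zero_mul, Complex.ofReal_zero]
  · rw [one_apply_ne h, smul_zero, sub_zero, upLaplacian_apply_of_ne h, fetaUp]
    by_cases hU : #(τ.1.1 ∪ τ'.1.1) = q + 2
    · rw [dif_pos ⟨fun e => h (Subtype.ext e), hU⟩, if_pos hU]
      simp [fsgn, pow_add, show bsgn true = 1 from rfl]
      ring
    · rw [dif_neg fun h' => hU h'.2, if_neg hU]
      simp

theorem bsgn_not (s : Bool) : bsgn (!s) = -bsgn s := by
  cases s <;> simp [bsgn]

/-- The matrix of `D_q^up` restricted to `C^q(K,ℂ)`, in the basis of positively oriented faces. -/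
noncomputable def cochainDisc (n q : ℕ) : Matrix (Face n (q + 1)) (Face n (q + 1)) ℂ :=
  ((q + 1 : ℂ) * ((n - (q + 1) : ℕ) : ℂ))⁻¹ •
    (upLaplacian ℂ n q - ((n - (q + 1) : ℕ) : ℂ) • 1)

noncomputable def orientationProj : Matrix Bool Bool ℂ :=
  Matrix.of fun s t => ((bsgn s * bsgn t : ℝ) : ℂ) / 2

theorem fdiscM_eq_kronecker : fdiscM n q = cochainDisc n q ⊗ₖ orientationProj := by
  ext τ τ'
  rw [fdiscM_apply, fc_mul_fc, fetaUp_eq_upLaplacian, kronecker_apply, cochainDisc,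
    orientationProj, Matrix.smul_apply, of_apply, smul_eq_mul]
  field_simp

theorem orientationProj_mul_self : orientationProj * orientationProj = orientationProj := by
  ext s t
  cases s <;> cases t <;> simp [orientationProj, mul_apply, bsgn] <;> norm_num

theorem trace_orientationProj : trace orientationProj = 1 := by
  simp [trace, orientationProj, bsgn]
  norm_num

theorem trace_cochainDisc : trace (cochainDisc n q) = 0 := by
  rw [cochainDisc, trace_smul, trace, Finset.sum_eq_zero fun A _ => ?_, smul_zero]
  rw [diag_apply, Matrix.sub_apply, upLaplacian_apply_self, Matrix.smul_apply, one_apply_eq,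
    smul_eq_mul, mul_one, sub_self]

theorem cochainDisc_mul_self (hq : q + 2 ≤ n) :
    cochainDisc n q * cochainDisc n q =
      (((n - (q + 1) : ℕ) : ℂ)⁻¹ + -(q + 1 : ℂ)⁻¹) • cochainDisc n q -
        (((n - (q + 1) : ℕ) : ℂ)⁻¹ * -(q + 1 : ℂ)⁻¹) • 1 := by
  have ha : (q + 1 : ℂ) ≠ 0 := Nat.cast_add_one_ne_zero q
  have hb : ((n - (q + 1) : ℕ) : ℂ) ≠ 0 := Nat.cast_ne_zero.2 (by omega)
  have hn : (n : ℂ) = (q + 1 : ℂ) + ((n - (q + 1) : ℕ) : ℂ) := by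
    rw [Nat.cast_sub (by omega)]
    push_cast
    ring
  simp only [cochainDisc, Matrix.smul_mul, Matrix.mul_smul, Matrix.sub_mul, Matrix.mul_sub,
    Matrix.one_mul, Matrix.mul_one, upLaplacian_mul_self, hn]
  match_scalars <;> field_simp <;> ring

theorem trace_fdiscM : trace (fdiscM n q) = 0 := by
  rw [fdiscM_eq_kronecker, trace_kronecker, trace_cochainDisc, zero_mul]

theorem trace_fdiscM_mul_self (hq : q + 2 ≤ n) :
    trace (fdiscM n q * fdiscM n q) =
      ((n - (q + 1) : ℕ) : ℂ)⁻¹ * (q + 1 : ℂ)⁻¹ * n.choose (q + 1) := by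
  rw [fdiscM_eq_kronecker, trace_kronecker_mul_self_of_idempotent orientationProj_mul_self,
    cochainDisc_mul_self hq, trace_orientationProj, trace_sub, trace_smul, trace_smul,
    trace_cochainDisc, trace_one, Fintype.card_finset_len, Fintype.card_fin]
  simp only [smul_eq_mul]
  ring

theorem range_toLin'_fdiscM_le : LinearMap.range (toLin' (fdiscM n q)) ≤ fCSub n q := by
  rintro _ ⟨g, rfl⟩ τ
  simp only [toLin'_apply, fdiscM_eq_kronecker, mulVec, dotProduct, ← sum_neg_distrib]
  refine Fintype.sum_congr _ _ fun σ => ?_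
  simp only [kroneckerMap_apply, fbar, orientationProj, of_apply, bsgn_not]
  push_cast
  ring

theorem toLin'_fdiscM_cube (hq : q + 2 ≤ n) :
    toLin' (fdiscM n q) * toLin' (fdiscM n q) * toLin' (fdiscM n q) =
      (((n - (q + 1) : ℕ) : ℂ)⁻¹ + -(q + 1 : ℂ)⁻¹) • (toLin' (fdiscM n q) * toLin' (fdiscM n q)) -
        (((n - (q + 1) : ℕ) : ℂ)⁻¹ * -(q + 1 : ℂ)⁻¹) • toLin' (fdiscM n q) := by
  simp only [Module.End.mul_eq_comp, ← toLin'_mul, ← map_smul, ← map_sub, fdiscM_eq_kronecker,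
    kronecker_mul_self_mul_self_of_idempotent (cochainDisc_mul_self hq) orientationProj_mul_self]

theorem fEig_eq_eigenspace {μ : ℂ} (hμ : μ ≠ 0) :
    fEig n q μ = Module.End.eigenspace (toLin' (fdiscM n q)) μ := by
  rw [fEig, ← toLin'_apply', inf_eq_left]
  exact Module.End.eigenspace_le_of_range_le range_toLin'_fdiscM_le hμ

theorem finrank_fEig_neg_inv_ne_zero (hq : q + 2 ≤ n) :
    Module.finrank ℂ (fEig n q (-(q + 1 : ℂ)⁻¹)) ≠ 0 := by
  have ha : (q + 1 : ℂ) ≠ 0 := Nat.cast_add_one_ne_zero q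
  have hb : ((n - (q + 1) : ℕ) : ℂ) ≠ 0 := Nat.cast_ne_zero.2 (by omega)
  have hne : -(q + 1 : ℂ)⁻¹ ≠ ((n - (q + 1) : ℕ) : ℂ)⁻¹ := fun h => by
    have h' : ((n - (q + 1) + (q + 1) : ℕ) : ℂ) = 0 := by
      field_simp at h
      push_cast
      linear_combination -h
    exact Nat.cast_ne_zero.2 (by omega) h'
  have hmult := Module.End.finrank_eigenspace_mul_of_cubic (by rw [toLin'_fdiscM_cube hq]; module)
    (neg_ne_zero.2 (inv_ne_zero ha)) hne
  rw [trace_toLin'_eq, trace_fdiscM, mul_zero, sub_zero, Module.End.mul_eq_comp, ← toLin'_mul,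
    trace_toLin'_eq, trace_fdiscM_mul_self hq,
    ← fEig_eq_eigenspace (neg_ne_zero.2 (inv_ne_zero ha))] at hmult
  intro h0
  rw [h0, Nat.cast_zero, zero_mul] at hmult
  exact mul_ne_zero (mul_ne_zero (inv_ne_zero hb) (inv_ne_zero ha))
    (Nat.cast_ne_zero.2 (Nat.choose_pos (by omega)).ne') hmult.symm

theorem fEig_inv_eq_bot (hq : q + 2 ≤ n) (hn : n ≠ 2 * (q + 1)) :
    fEig n q (q + 1 : ℂ)⁻¹ = ⊥ := by
  have ha : (q + 1 : ℂ)⁻¹ ≠ 0 := inv_ne_zero (Nat.cast_add_one_ne_zero q)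
  have hne : (q + 1 : ℂ)⁻¹ ≠ ((n - (q + 1) : ℕ) : ℂ)⁻¹ := fun h => hn <| by
    have h' : ((q + 1 : ℕ) : ℂ) = ((n - (q + 1) : ℕ) : ℂ) := by
      push_cast
      exact inv_injective h
    have := Nat.cast_injective h'
    omega
  rw [fEig_eq_eigenspace ha]
  refine Module.End.eigenspace_eq_bot_of_cubic (toLin'_fdiscM_cube hq) ?_
  rw [sub_neg_eq_add, ← two_mul]
  exact mul_ne_zero (mul_ne_zero ha (sub_ne_zero.2 hne)) (mul_ne_zero two_ne_zero ha)

theorem finrank_fEig_neg (hn : n = 2 * (q + 1)) (μ : ℂ) :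
    Module.finrank ℂ (fEig n q (-μ)) = Module.finrank ℂ (fEig n q μ) := by
  rcases eq_or_ne μ 0 with rfl | hμ
  · rw [neg_zero]
  rw [fEig_eq_eigenspace hμ, fEig_eq_eigenspace (neg_ne_zero.2 hμ)]
  refine Module.End.finrank_eigenspace_neg_of_cube (μ := (q + 1 : ℂ)⁻¹) ?_
    (by rw [trace_toLin'_eq, trace_fdiscM]) μ
  rw [toLin'_fdiscM_cube (by omega), hn, show 2 * (q + 1) - (q + 1) = q + 1 by omega]
  push_cast
  module

end Discriminant

/-- For the full `(n−1)`-dimensional simplex and `0 ≤ q ≤ n−2`, the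
multiset of eigenvalues of the restriction of `D_q^up` to `C^q(K,ℂ)` is symmetric about
the origin if and only if `n` is even and `q = n/2 − 1` (that is, `n = 2(q+1)`). -/
theorem full_simplex_disc_up_spectral_symmetry_iff (n q : ℕ) (hq : q + 2 ≤ n) :
    (∀ μ : ℂ, Module.finrank ℂ ↥(fEig n q μ) = Module.finrank ℂ ↥(fEig n q (-μ)))
      ↔ n = 2 * (q + 1) := by
  refine ⟨fun H => ?_, fun hn μ => (finrank_fEig_neg hn μ).symm⟩
  by_contra hn
  have h := finrank_fEig_neg_inv_ne_zero hq
  rw [H, neg_neg, fEig_inv_eq_bot hq hn, finrank_bot] at h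
  exact h rfl
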